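/- Let $M_c(s) = f_0 + g^T s + \tfrac12 s^T H s + \tfrac{\beta}{6}\|s\|^3 + \tfrac{\sigma_c}{4}\|s\|^4$ with $\sigma_c > 0$, and suppose $s_c \neq 0$ satisfies both the stationarity equation $(H + \tfrac{\beta}{2}\|s_c\| I + \sigma_c\|s_c\|^2 I)s_c = -g$ and the second-order inequality $s_c^T H s_c + \beta\|s_c\|^3 + 3\sigma_c\|s_c\|^4 \ge 0$. Then $M_c(0) - M_c(s_c) \ge -\tfrac{\beta}{6}\|s_c\|^3 - \tfrac{3}{4}\sigma_c\|s_c\|^4$. -/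

import Mathlib

open Matrix

noncomputable def euclNorm {n : ℕ} (v : Fin n → ℝ) : ℝ := Real.sqrt (v ⬝ᵥ v)

noncomputable def Mc {n : ℕ} (f0 : ℝ) (g : Fin n → ℝ) (H : Matrix (Fin n) (Fin n) ℝ)
    (β σc : ℝ) (s : Fin n → ℝ) : ℝ :=
  f0 + g ⬝ᵥ s + (1 / 2) * (s ⬝ᵥ H.mulVec s) + (β / 6) * (euclNorm s) ^ 3
    + (σc / 4) * (euclNorm s) ^ 4

/-
Pairing the stationarity equation with `s_c` expresses `gᵀ s_c` through `s_cᵀ H s_c` and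
`‖s_c‖`; substituting into the model turns the decrease `M_c(0) - M_c(s_c)` into
`½ s_cᵀ H s_c + (β/3)‖s_c‖³ + (3/4)σ_c‖s_c‖⁴`, and the claim is then half of the
second-order inequality.
-/

section

variable {n : ℕ}

lemma euclNorm_sq (v : Fin n → ℝ) : euclNorm v ^ 2 = v ⬝ᵥ v :=
  Real.sq_sqrt (Finset.sum_nonneg fun i _ => mul_self_nonneg (v i))

@[simp]
lemma euclNorm_zero : euclNorm (0 : Fin n → ℝ) = 0 := by
  simp [euclNorm]

lemma Mc_zero {f0 : ℝ} {g : Fin n → ℝ} {H : Matrix (Fin n) (Fin n) ℝ} {β σc : ℝ} :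
    Mc f0 g H β σc 0 = f0 := by
  simp [Mc]

lemma dotProduct_eq_of_stationary {g s : Fin n → ℝ} {H : Matrix (Fin n) (Fin n) ℝ} {β σc : ℝ}
    (hstat : (H + ((β / 2) * euclNorm s) • (1 : Matrix (Fin n) (Fin n) ℝ)
        + (σc * euclNorm s ^ 2) • (1 : Matrix (Fin n) (Fin n) ℝ)).mulVec s = -g) :
    g ⬝ᵥ s = -(s ⬝ᵥ H.mulVec s + (β / 2) * euclNorm s ^ 3 + σc * euclNorm s ^ 4) := by
  have hpair := congrArg (s ⬝ᵥ ·) hstat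
  simp only [add_mulVec, smul_mulVec, one_mulVec, dotProduct_add, dotProduct_smul,
    dotProduct_neg, smul_eq_mul, ← euclNorm_sq] at hpair
  rw [dotProduct_comm]
  linear_combination hpair

lemma Mc_zero_sub_Mc_of_stationary {f0 : ℝ} {g s : Fin n → ℝ} {H : Matrix (Fin n) (Fin n) ℝ}
    {β σc : ℝ}
    (hstat : (H + ((β / 2) * euclNorm s) • (1 : Matrix (Fin n) (Fin n) ℝ)
        + (σc * euclNorm s ^ 2) • (1 : Matrix (Fin n) (Fin n) ℝ)).mulVec s = -g) :
    Mc f0 g H β σc 0 - Mc f0 g H β σc s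
      = (1 / 2) * (s ⬝ᵥ H.mulVec s) + (β / 3) * euclNorm s ^ 3
        + (3 / 4) * σc * euclNorm s ^ 4 := by
  rw [Mc_zero, Mc, dotProduct_eq_of_stationary hstat]
  ring

end

theorem stmt_12_general {n : ℕ} (f0 : ℝ) (g : Fin n → ℝ) (H : Matrix (Fin n) (Fin n) ℝ)
    (β σc : ℝ)
    (sc : Fin n → ℝ)
    (hstat : (H + ((β / 2) * euclNorm sc) • (1 : Matrix (Fin n) (Fin n) ℝ)
        + (σc * (euclNorm sc) ^ 2) • (1 : Matrix (Fin n) (Fin n) ℝ)).mulVec sc = -g)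
    (hsoc : 0 ≤ sc ⬝ᵥ H.mulVec sc + β * (euclNorm sc) ^ 3 + 3 * σc * (euclNorm sc) ^ 4) :
    -(β / 6) * (euclNorm sc) ^ 3 - (3 / 4) * σc * (euclNorm sc) ^ 4
      ≤ Mc f0 g H β σc 0 - Mc f0 g H β σc sc := by
  rw [Mc_zero_sub_Mc_of_stationary hstat]
  linarith

theorem stmt_12 {n : ℕ} (f0 : ℝ) (g : Fin n → ℝ) (H : Matrix (Fin n) (Fin n) ℝ)
    (β σc : ℝ) (hH : H.IsSymm) (hσ : 0 < σc)
    (sc : Fin n → ℝ) (hsc : sc ≠ 0)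
    (hstat : (H + ((β / 2) * euclNorm sc) • (1 : Matrix (Fin n) (Fin n) ℝ)
        + (σc * (euclNorm sc) ^ 2) • (1 : Matrix (Fin n) (Fin n) ℝ)).mulVec sc = -g)
    (hsoc : 0 ≤ sc ⬝ᵥ H.mulVec sc + β * (euclNorm sc) ^ 3 + 3 * σc * (euclNorm sc) ^ 4) :
    -(β / 6) * (euclNorm sc) ^ 3 - (3 / 4) * σc * (euclNorm sc) ^ 4
      ≤ Mc f0 g H β σc 0 - Mc f0 g H β σc sc :=
  stmt_12_general f0 g H β σc sc hstat hsoc
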